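/- Let S be an inverse semigroup with zero. The centralizer Z(S) = {s ∈ S : se = es for all idempotents e ∈ E(S)} is contained in S^iso = {s ∈ S : s*s is weakly fixed by s}. -/
import Mathlib

/-- Auxiliary: in a semigroup with unique generalized inverses, for idempotents
`e, f` the product `e*f` is idempotent and `e*f = f*(e*f)*e`. -/
theorem stmt3_aux {S : Type*} [Semigroup S] (star : S → S)
    (hinv : ∀ s : S, s * star s * s = s)
    (hinv' : ∀ s : S, star s * s * star s = star s)
    (huniq : ∀ s t : S, s * t * s = s → t * s * t = t → t = star s)
    (e f : S) (he : e * e = e) (hf : f * f = f) :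
    (e * f) * (e * f) = e * f ∧ e * f = f * (e * f) * e := by
  set x := star (e * f) with hxdef
  have hx : (e * f) * x * (e * f) = e * f := hinv (e * f)
  have hx' : x * (e * f) * x = x := hinv' (e * f)
  -- f*x*e is also a generalized inverse of e*f
  have hA : (e * f) * (f * x * e) * (e * f) = e * f := by
    have : (e * f) * (f * x * e) * (e * f)
        = e * ((f * f) * x * (e * e)) * f := by
      simp only [mul_assoc]
    rw [this, he, hf]
    have : e * (f * x * e) * f = (e * f) * x * (e * f) := by
      simp only [mul_assoc]
    rw [this, hx]
  have hB : (f * x * e) * (e * f) * (f * x * e) = f * x * e := by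
    have : (f * x * e) * (e * f) * (f * x * e)
        = f * (x * ((e * e) * (f * f)) * x) * e := by
      simp only [mul_assoc]
    rw [this, he, hf]
    rw [hx']
  have heq : f * x * e = x := huniq (e * f) (f * x * e) hA hB
  have h5 : (f * x * e) * (f * x * e) = f * x * e := by
    have : (f * x * e) * (f * x * e) = f * (x * (e * f) * x) * e := by
      simp only [mul_assoc]
    rw [this, hx']
  have hxidem : x * x = x := by rw [← heq]; exact h5
  -- x is its own generalized inverse, and e*f is a generalized inverse of x,
  -- hence e*f = star x = x
  have hxx : x * x * x = x := by rw [hxidem, hxidem]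
  have hstarx : x = star x := huniq x x hxx hxx
  have hef : e * f = star x := huniq x (e * f) hx' hx
  have hefx : e * f = x := by rw [hef, ← hstarx]
  constructor
  · rw [hefx]; exact hxidem
  · rw [hefx]; exact heq.symm

theorem stmt3_comm {S : Type*} [Semigroup S] (star : S → S)
    (hinv : ∀ s : S, s * star s * s = s)
    (hinv' : ∀ s : S, star s * s * star s = star s)
    (huniq : ∀ s t : S, s * t * s = s → t * s * t = t → t = star s)
    (e f : S) (he : e * e = e) (hf : f * f = f) :
    e * f = f * e := by
  have h1 := stmt3_aux star hinv hinv' huniq e f he hf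
  have h2 := stmt3_aux star hinv hinv' huniq f e hf he
  -- f*e = e*(f*e)*f = (e*f)*(e*f) = e*f
  have : f * e = (e * f) * (e * f) := by
    rw [h2.2]
    simp only [mul_assoc]
  rw [this, h1.1]

/-- In an inverse semigroup with zero, the centralizer
`Z(S) = {s : se = es for all idempotents e}` is contained in `S^iso`. -/
theorem stmt3 {S : Type*} [Semigroup S] (star : S → S) (z : S)
    (hz : ∀ s : S, z * s = z ∧ s * z = z)
    (hinv : ∀ s : S, s * star s * s = s)
    (hinv' : ∀ s : S, star s * s * star s = star s)
    (huniq : ∀ s t : S, s * t * s = s → t * s * t = t → t = star s)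
    (s : S) (hcen : ∀ e : S, e * e = e → s * e = e * s) :
    ∀ f : S, f * f = f → f ≠ z → f * (star s * s) = f →
      s * f * star s * f ≠ z := by
  intro f hf hfz hfs h
  apply hfz
  -- s*s* and s*s are idempotent
  have hss' : (s * star s) * (s * star s) = s * star s := by
    have : (s * star s) * (s * star s) = s * (star s * s * star s) := by
      simp only [mul_assoc]
    rw [this, hinv']
  have hs's : (star s * s) * (star s * s) = star s * s := by
    have : (star s * s) * (star s * s) = star s * (s * star s * s) := by
      simp only [mul_assoc]
    rw [this, hinv]
  -- s*f = f*s
  have hsf : s * f = f * s := hcen f hf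
  -- rewrite s*f*s**f = (s*s*)*f
  have key : s * f * star s * f = (s * star s) * f := by
    have hc : f * (s * star s) = (s * star s) * f :=
      stmt3_comm star hinv hinv' huniq f (s * star s) hf hss'
    calc s * f * star s * f = f * (s * star s) * f := by
          rw [hsf]; simp only [mul_assoc]
      _ = (s * star s) * f * f := by rw [hc]
      _ = (s * star s) * (f * f) := by rw [mul_assoc]
      _ = (s * star s) * f := by rw [hf]
  rw [key] at h
  -- from (s*s*)*f = z deduce (s**f) = z
  have h2 : star s * f = z := by
    have : star s * ((s * star s) * f) = star s * z := by rw [h]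
    rw [(hz (star s)).2] at this
    calc star s * f = (star s * s * star s) * f := by rw [hinv']
      _ = star s * ((s * star s) * f) := by simp only [mul_assoc]
      _ = z := this
  -- then (s**s)*f = z
  have h3 : (star s * s) * f = z := by
    calc (star s * s) * f = star s * (s * f) := by rw [mul_assoc]
      _ = star s * (f * s) := by rw [hsf]
      _ = (star s * f) * s := by rw [mul_assoc]
      _ = z * s := by rw [h2]
      _ = z := (hz s).1
  -- f = f*(s**s) = (s**s)*f = z
  have hc2 : f * (star s * s) = (star s * s) * f :=
    stmt3_comm star hinv hinv' huniq f (star s * s) hf hs's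
  rw [← hfs, hc2, h3]
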